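/- Let a > −1, let m ≥ 1, and let 1 > s₁ ≥ s₂ ≥ ⋯ ≥ s_m ≥ 0 be real numbers. Then ∏_{k=1}^{m} (1 − s_k²)^a · ∏_{1≤j<k≤m} (s_j² − s_k²) · [ ∫_{s₁}^{1} dt₁ ∫_{s₂}^{s₁} dt₂ ⋯ ∫_{s_m}^{s_{m−1}} dt_m ∏_{k=1}^{m} t_k (1 − t_k²)^a · ∏_{1≤j<k≤m} (t_j² − t_k²) ] = ( ∏_{k=1}^{m} 1/(2a+2k) ) · ∏_{k=1}^{m} (1 − s_k²)^{2a+1} · ∏_{1≤j<k≤m} (s_j² − s_k²)². -/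

import Mathlib

/-!
Since the polynomials `Pₖ = jacobiColumnPoly a k` are monic of degree `k`, the odd-level density
`∏ tₖ (1 - tₖ²)^a · Δ(t²)` is `± det [gₖ(tᵢ)]` with `gₖ(x) = x (1 - x²)^a Pₖ(x²)`. Integrating a
determinant of functions of separate variables over a box gives the determinant of the
one-dimensional integrals. Each `gₖ` has the explicit primitive
`Gₖ(x) = -(1 - x²)^(a+1) x^(2k) / (2(a+1+k))`, which vanishes at `x = 1`, so the rows
`Gₖ(s_{i-1}) - Gₖ(s_i)` (with `s₀ = 1`) telescope to `-Gₖ(s_i)`. That is again a Vandermonde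
determinant in `s²`, with row factors `(1 - s_i²)^(a+1)` and column factors `1 / (2a + 2k)`.
-/

open MeasureTheory
open Finset Set Polynomial

theorem prod_Iio_comm {M : Type*} [CommMonoid M] {n : ℕ} (f : Fin n → Fin n → M) :
    ∏ k, ∏ j ∈ Iio k, f j k = ∏ i, ∏ j ∈ Ioi i, f i j := by
  rw [prod_sigma', prod_sigma']
  exact prod_nbij' (fun x => ⟨x.2, x.1⟩) (fun x => ⟨x.2, x.1⟩) (by simp) (by simp)
    (by simp) (by simp) (by simp)

theorem sum_card_Iio_fin (n : ℕ) : ∑ k : Fin n, #(Iio k) = n.choose 2 := by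
  simp only [Fin.card_Iio]
  rw [Fin.sum_univ_eq_sum_range (fun k => k), sum_range_id, Nat.choose_two_right]

theorem prod_Iio_sub_eq_neg_one_pow_mul_det_vandermonde {R : Type*} [CommRing R] {n : ℕ}
    (v : Fin n → R) :
    ∏ k, ∏ j ∈ Iio k, (v j - v k) = (-1) ^ n.choose 2 * (Matrix.vandermonde v).det := by
  rw [Matrix.det_vandermonde, ← prod_Iio_comm (fun i j => v j - v i), ← sum_card_Iio_fin,
    ← prod_pow_eq_pow_sum, ← prod_mul_distrib]
  refine prod_congr rfl fun k _ => ?_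
  rw [← prod_const, ← prod_mul_distrib]
  exact prod_congr rfl fun j _ => by ring

theorem det_of_sub_succ_eq_det_of_neg_succ {R : Type*} [CommRing R] {n : ℕ}
    (h : ℕ → Fin n → R) (h0 : h 0 = 0) :
    (Matrix.of fun (j : Fin n) k => h j k - h (j + 1) k).det =
      (Matrix.of fun (j : Fin n) k => -h (j + 1) k).det := by
  cases n with
  | zero => simp
  | succ n =>
    refine (Matrix.det_eq_of_forall_row_eq_smul_add_pred (fun _ => 1) ?_ ?_).symm
    · simp [h0]
    · intro i j
      simp only [Matrix.of_apply, Fin.val_succ, Fin.val_castSucc, one_mul]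
      ring

theorem setIntegral_univ_pi_prod {ι α : Type*} [Fintype ι] [MeasurableSpace α]
    (μ : Measure α) [SigmaFinite μ] (S : ι → Set α) (f : ι → α → ℝ) :
    ∫ t in univ.pi S, ∏ i, f i (t i) ∂(Measure.pi fun _ => μ) = ∏ i, ∫ x in S i, f i x ∂μ := by
  rw [Measure.restrict_pi_pi]
  exact integral_fintype_prod_eq_prod _

theorem setIntegral_univ_pi_det {ι α : Type*} [Fintype ι] [DecidableEq ι] [MeasurableSpace α]
    (μ : Measure α) [SigmaFinite μ] (S : ι → Set α) (f : ι → α → ℝ)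
    (hf : ∀ i k, IntegrableOn (f k) (S i) μ) :
    ∫ t in univ.pi S, (Matrix.of fun i k => f k (t i)).det ∂(Measure.pi fun _ => μ) =
      (Matrix.of fun i k => ∫ x in S i, f k x ∂μ).det := by
  have hterm : ∀ σ : Equiv.Perm ι, Integrable (fun t : ι → α => ∏ i, f (σ i) (t i))
      ((Measure.pi fun _ => μ).restrict (univ.pi S)) := fun σ => by
    rw [Measure.restrict_pi_pi]
    exact Integrable.fintype_prod fun i => hf i (σ i)
  simp_rw [← Matrix.det_transpose (Matrix.of _), Matrix.det_apply', Matrix.transpose_apply,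
    Matrix.of_apply]
  rw [integral_finsetSum _ fun σ _ => (hterm σ).const_mul _]
  simp_rw [integral_const_mul, setIntegral_univ_pi_prod]

theorem prod_Icc_one_eq_prod_fin {M : Type*} [CommMonoid M] (m : ℕ) (f : ℕ → M) :
    ∏ k ∈ Icc 1 m, f k = ∏ k : Fin m, f (k + 1) := by
  rw [Fin.prod_univ_eq_prod_range (fun k => f (k + 1)), range_eq_Ico, prod_Ico_add', zero_add,
    Finset.Ico_add_one_right_eq_Icc]

theorem prod_Iio_fin_eq_prod_range {M : Type*} [CommMonoid M] {m : ℕ} (k : Fin m) (f : ℕ → M) :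
    ∏ j ∈ Iio k, f j = ∏ j ∈ range k, f j := by
  rw [← Nat.Iio_eq_range, ← Fin.map_valEmbedding_Iio, prod_map]
  rfl

theorem prod_Icc_one_prod_Ico_eq_prod_fin {M : Type*} [CommMonoid M] (m : ℕ) (f : ℕ → ℕ → M) :
    ∏ k ∈ Icc 1 m, ∏ j ∈ Ico 1 k, f j k = ∏ k : Fin m, ∏ j ∈ Iio k, f (j + 1) (k + 1) := by
  rw [prod_Icc_one_eq_prod_fin]
  refine prod_congr rfl fun k _ => ?_
  rw [prod_Iio_fin_eq_prod_range k (fun j => f (j + 1) (k + 1)), range_eq_Ico,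
    prod_Ico_add' (fun j => f j (k + 1)), zero_add]

/-- Chosen so that `x (1 - x²)^a P_k(x²)` is the derivative of `jacobiPrimitive a k`. -/
noncomputable def jacobiColumnPoly (a : ℝ) (k : ℕ) : ℝ[X] :=
  X ^ k - C (k / (a + 1 + k)) * X ^ (k - 1)

noncomputable def jacobiPrimitive (a : ℝ) (k : ℕ) (x : ℝ) : ℝ :=
  -((1 - x ^ 2) ^ (a + 1) * x ^ (2 * k)) / (2 * (a + 1 + k))

theorem jacobiColumnPoly_monic (a : ℝ) (k : ℕ) : (jacobiColumnPoly a k).Monic := by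
  unfold jacobiColumnPoly
  monicity!
  omega

theorem jacobiColumnPoly_natDegree (a : ℝ) (k : ℕ) : (jacobiColumnPoly a k).natDegree = k := by
  unfold jacobiColumnPoly
  compute_degree!
  split_ifs with h
  · simp [show k = 0 by omega]
  · simp

section
variable {a : ℝ} (ha : -1 < a)
include ha

theorem hasDerivAt_jacobiPrimitive (k : ℕ) {x : ℝ} (hx : x ^ 2 < 1) :
    HasDerivAt (jacobiPrimitive a k)
      (x * (1 - x ^ 2) ^ a * (jacobiColumnPoly a k).eval (x ^ 2)) x := by
  have hbase : 0 < 1 - x ^ 2 := by linarith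
  have hden : a + 1 + k ≠ 0 := by linarith [(k.cast_nonneg : (0 : ℝ) ≤ k)]
  have hweight : HasDerivAt (fun x : ℝ => (1 - x ^ 2) ^ (a + 1))
      (-(2 * x) * (a + 1) * (1 - x ^ 2) ^ a) x := by
    simpa using ((hasDerivAt_pow 2 x).const_sub 1).rpow_const (p := a + 1) (Or.inl hbase.ne')
  refine ((hweight.mul (hasDerivAt_pow (2 * k) x)).neg.div_const _).congr_deriv ?_
  rw [Real.rpow_add_one hbase.ne', jacobiColumnPoly]
  rcases k with _ | k
  · field_simp
    simp
  · rw [show 2 * (k + 1) - 1 = 2 * k + 1 by omega, Nat.add_sub_cancel]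
    simp only [eval_sub, eval_pow, eval_X, eval_mul, eval_C, ← pow_mul]
    field_simp
    push_cast
    ring

theorem continuous_jacobiPrimitive (k : ℕ) : Continuous (jacobiPrimitive a k) := by
  unfold jacobiPrimitive
  fun_prop (disch := linarith)

theorem jacobiPrimitive_one (k : ℕ) : jacobiPrimitive a k 1 = 0 := by
  simp [jacobiPrimitive, Real.zero_rpow (by linarith : a + 1 ≠ 0)]

/-- The weight is integrable up to the singular endpoint `1` because it is the nonnegative
derivative of the continuous function `jacobiPrimitive a 0`. -/
theorem integrableOn_jacobiWeight_mul {lo hi : ℝ} (h0 : 0 ≤ lo) (h1 : hi ≤ 1) (p : ℝ[X]) :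
    IntegrableOn (fun x => x * (1 - x ^ 2) ^ a * p.eval (x ^ 2)) (Icc lo hi) := by
  have hweight : IntegrableOn (fun x => x * (1 - x ^ 2) ^ a) (Icc lo hi) := by
    rw [integrableOn_Icc_iff_integrableOn_Ioc]
    refine intervalIntegral.integrableOn_deriv_of_nonneg
      (continuous_jacobiPrimitive ha 0).continuousOn (fun x hx => ?_) (fun x hx => ?_)
    · simpa [jacobiColumnPoly] using
        hasDerivAt_jacobiPrimitive ha 0 (x := x) (by nlinarith [hx.1, hx.2])
    · have : 0 < 1 - x ^ 2 := by nlinarith [hx.1, hx.2]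
      have : 0 < x := by linarith [hx.1]
      positivity
  exact hweight.mul_continuousOn (by fun_prop) isCompact_Icc

theorem setIntegral_Ioo_jacobiColumn {lo hi : ℝ} (h0 : 0 ≤ lo) (hle : lo ≤ hi) (h1 : hi ≤ 1)
    (k : ℕ) :
    ∫ x in Ioo lo hi, x * (1 - x ^ 2) ^ a * (jacobiColumnPoly a k).eval (x ^ 2) =
      jacobiPrimitive a k hi - jacobiPrimitive a k lo := by
  rw [← integral_Ioc_eq_integral_Ioo, ← intervalIntegral.integral_of_le hle]
  refine intervalIntegral.integral_eq_sub_of_hasDerivAt_of_le hle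
    (continuous_jacobiPrimitive ha k).continuousOn
    (fun x hx => hasDerivAt_jacobiPrimitive ha k (by nlinarith [hx.1, hx.2])) ?_
  exact (intervalIntegrable_iff_integrableOn_Icc_of_le hle).2
    (integrableOn_jacobiWeight_mul ha h0 h1 _)

end

theorem prod_mul_prod_Iio_sq_sub_eq_det_jacobiColumn (a : ℝ) {m : ℕ} (t : Fin m → ℝ) :
    (∏ k, t k * (1 - t k ^ 2) ^ a) * ∏ k, ∏ j ∈ Iio k, (t j ^ 2 - t k ^ 2) =
      (-1) ^ m.choose 2 * (Matrix.of fun i k : Fin m =>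
        t i * (1 - t i ^ 2) ^ a * (jacobiColumnPoly a k).eval (t i ^ 2)).det := by
  have hfactor := Matrix.det_mul_column (fun i => t i * (1 - t i ^ 2) ^ a)
    (Matrix.of fun i k : Fin m => (jacobiColumnPoly a k).eval (t i ^ 2))
  simp only [Matrix.of_apply] at hfactor
  rw [hfactor, ← Matrix.det_eval_matrixOfPolynomials_eq_det_vandermonde _ _
      (fun k => jacobiColumnPoly_natDegree a k) (fun k => jacobiColumnPoly_monic a k),
    prod_Iio_sub_eq_neg_one_pow_mul_det_vandermonde (fun i => t i ^ 2)]
  ring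

theorem det_neg_jacobiPrimitive {m : ℕ} (a : ℝ) (v : Fin m → ℝ) :
    (Matrix.of fun j k : Fin m => -jacobiPrimitive a k (v j)).det =
      (∏ k : Fin m, 1 / (2 * (a + 1 + k))) * (∏ j, (1 - v j ^ 2) ^ (a + 1)) *
        (Matrix.vandermonde (v · ^ 2)).det := by
  have hfactor := Matrix.det_mul_column (fun j => (1 - v j ^ 2) ^ (a + 1))
    (Matrix.of fun j k : Fin m => 1 / (2 * (a + 1 + k)) * Matrix.vandermonde (v · ^ 2) j k)
  have hfactor' := Matrix.det_mul_row (fun k : Fin m => 1 / (2 * (a + 1 + k)))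
    (Matrix.vandermonde (v · ^ 2))
  simp only [Matrix.of_apply] at hfactor hfactor'
  have hentry : ∀ j k : Fin m, -jacobiPrimitive a k (v j) =
      (1 - v j ^ 2) ^ (a + 1) * (1 / (2 * (a + 1 + k)) * Matrix.vandermonde (v · ^ 2) j k) :=
    fun j k => by
      rw [jacobiPrimitive, Matrix.vandermonde_apply, ← pow_mul]
      ring
  simp_rw [hentry]
  rw [hfactor, hfactor']
  ring

theorem setIntegral_interlacing_jacobi (m : ℕ) {a : ℝ} (ha : -1 < a) {u : ℕ → ℝ} (hu0 : u 0 = 1)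
    (hu : AntitoneOn u (Set.Iic m)) (hum : 0 ≤ u m) :
    ∫ t in univ.pi fun i : Fin m => Ioo (u (i + 1)) (u i),
        (∏ k, t k * (1 - t k ^ 2) ^ a) * ∏ k, ∏ j ∈ Iio k, (t j ^ 2 - t k ^ 2) =
      (∏ k : Fin m, 1 / (2 * (a + 1 + k))) * (∏ k : Fin m, (1 - u (k + 1) ^ 2) ^ (a + 1)) *
        ∏ k : Fin m, ∏ j ∈ Iio k, (u (j + 1) ^ 2 - u (k + 1) ^ 2) := by
  have hmem : ∀ j ≤ m, j ∈ Set.Iic m := fun j hj => hj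
  have hlo : ∀ i : Fin m, 0 ≤ u (i + 1) := fun i =>
    hum.trans (hu (hmem _ i.isLt) (hmem m le_rfl) i.isLt)
  have hle : ∀ i : Fin m, u (i + 1) ≤ u i := fun i =>
    hu (hmem _ i.isLt.le) (hmem _ i.isLt) (Nat.le_succ _)
  have hhi : ∀ i : Fin m, u i ≤ 1 := fun i =>
    hu0 ▸ hu (hmem _ (Nat.zero_le _)) (hmem _ i.isLt.le) (Nat.zero_le _)
  simp_rw [prod_mul_prod_Iio_sq_sub_eq_det_jacobiColumn, integral_const_mul]
  rw [volume_pi, setIntegral_univ_pi_det _ _ _ fun i k =>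
    (integrableOn_jacobiWeight_mul ha (hlo i) (hhi i) _).mono_set Ioo_subset_Icc_self]
  simp_rw [setIntegral_Ioo_jacobiColumn ha (hlo _) (hle _) (hhi _)]
  rw [det_of_sub_succ_eq_det_of_neg_succ (fun j k => jacobiPrimitive a k (u j))
      (by ext k; simp [hu0, jacobiPrimitive_one ha]),
    det_neg_jacobiPrimitive a (fun j : Fin m => u (j + 1)),
    prod_Iio_sub_eq_neg_one_pow_mul_det_vandermonde fun j : Fin m => u (j + 1) ^ 2]
  ring

theorem antitoneOn_ite_zero_one {s : ℕ → ℝ} {m : ℕ} (hs1 : s 1 ≤ 1)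
    (hdec : ∀ i, 1 ≤ i → i < m → s (i + 1) ≤ s i) :
    AntitoneOn (fun j => if j = 0 then 1 else s j) (Set.Iic m) :=
  antitoneOn_of_succ_le ordConnected_Iic fun j _ _ hj => by
    rcases Nat.eq_zero_or_pos j with rfl | hj0
    · simpa using hs1
    · simpa [hj0.ne'] using hdec j hj0 (Order.succ_le_iff.1 hj)

theorem jacobi_even_decimation_density_general (a : ℝ) (ha : -1 < a) (m : ℕ)
    (s : ℕ → ℝ) (hs1 : s 1 < 1)
    (hdec : ∀ i, 1 ≤ i → i < m → s (i + 1) ≤ s i) (hsm : 0 ≤ s m) :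
    (∏ k ∈ Finset.Icc 1 m, (1 - (s k) ^ 2) ^ a) *
      (∏ k ∈ Finset.Icc 1 m, ∏ j ∈ Finset.Ico 1 k, ((s j) ^ 2 - (s k) ^ 2)) *
      (∫ t in {t : Fin m → ℝ | ∀ i : Fin m,
          s ((i : ℕ) + 1) < t i ∧ t i < (if (i : ℕ) = 0 then 1 else s (i : ℕ))},
        (∏ k : Fin m, t k * (1 - (t k) ^ 2) ^ a) *
          ∏ k : Fin m, ∏ j ∈ Finset.Iio k, ((t j) ^ 2 - (t k) ^ 2)) =
    (∏ k ∈ Finset.Icc 1 m, (1 : ℝ) / (2 * a + 2 * k)) *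
      (∏ k ∈ Finset.Icc 1 m, (1 - (s k) ^ 2) ^ (2 * a + 1)) *
      ∏ k ∈ Finset.Icc 1 m, ∏ j ∈ Finset.Ico 1 k, ((s j) ^ 2 - (s k) ^ 2) ^ 2 := by
  set u : ℕ → ℝ := fun j => if j = 0 then 1 else s j
  have hu : AntitoneOn u (Set.Iic m) := antitoneOn_ite_zero_one hs1.le hdec
  have hpos : ∀ k : Fin m, 0 < 1 - s (k + 1) ^ 2 := fun k => by
    have hk := k.isLt
    have hlo : u m ≤ u (k + 1) := hu (show k + 1 ≤ m by omega) (show m ≤ m from le_rfl) hk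
    have hhi : u (k + 1) ≤ u 1 := hu (show 1 ≤ m by omega) (show k + 1 ≤ m by omega) (by omega)
    simp only [u, Nat.add_one_ne_zero, one_ne_zero, if_false, if_neg (show m ≠ 0 by omega)]
      at hlo hhi
    nlinarith
  have hregion : {t : Fin m → ℝ | ∀ i : Fin m,
      s ((i : ℕ) + 1) < t i ∧ t i < (if (i : ℕ) = 0 then 1 else s (i : ℕ))} =
      univ.pi fun i : Fin m => Ioo (u (i + 1)) (u i) := by
    ext t
    simp [u]
  have hum : 0 ≤ u m := by simp only [u]; split_ifs <;> linarith
  rw [hregion, setIntegral_interlacing_jacobi m ha (by simp [u]) hu hum]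
  simp only [prod_Icc_one_prod_Ico_eq_prod_fin]
  simp only [prod_Icc_one_eq_prod_fin, u, Nat.add_one_ne_zero, if_false]
  have hexp : ∏ k : Fin m, (1 - s (k + 1) ^ 2) ^ (2 * a + 1) =
      (∏ k : Fin m, (1 - s (k + 1) ^ 2) ^ a) * ∏ k : Fin m, (1 - s (k + 1) ^ 2) ^ (a + 1) := by
    rw [← prod_mul_distrib]
    exact prod_congr rfl fun k _ => by rw [← Real.rpow_add (hpos k)]; ring_nf
  have hconst : ∏ k : Fin m, (1 : ℝ) / (2 * a + 2 * ((k + 1 : ℕ) : ℝ)) =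
      ∏ k : Fin m, 1 / (2 * (a + 1 + k)) :=
    prod_congr rfl fun k _ => by push_cast; ring
  rw [hexp, hconst]
  simp only [Finset.prod_pow]
  ring

/-- symmetric Jacobi case of Theorem 1.1, even order `n = 2m`, at the level
of densities: multiplying the even-indexed factor by the integral of the odd-indexed factor
over the interlacing region gives `∏ 1/(2a+2k) ∏ (1-s_k²)^{2a+1} Δ(s²)²`. -/
theorem jacobi_even_decimation_density (a : ℝ) (ha : -1 < a) (m : ℕ) (hm : 1 ≤ m)
    (s : ℕ → ℝ) (hs1 : s 1 < 1)
    (hdec : ∀ i, 1 ≤ i → i < m → s (i + 1) ≤ s i) (hsm : 0 ≤ s m) :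
    (∏ k ∈ Finset.Icc 1 m, (1 - (s k) ^ 2) ^ a) *
      (∏ k ∈ Finset.Icc 1 m, ∏ j ∈ Finset.Ico 1 k, ((s j) ^ 2 - (s k) ^ 2)) *
      (∫ t in {t : Fin m → ℝ | ∀ i : Fin m,
          s ((i : ℕ) + 1) < t i ∧ t i < (if (i : ℕ) = 0 then 1 else s (i : ℕ))},
        (∏ k : Fin m, t k * (1 - (t k) ^ 2) ^ a) *
          ∏ k : Fin m, ∏ j ∈ Finset.Iio k, ((t j) ^ 2 - (t k) ^ 2)) =
    (∏ k ∈ Finset.Icc 1 m, (1 : ℝ) / (2 * a + 2 * k)) *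
      (∏ k ∈ Finset.Icc 1 m, (1 - (s k) ^ 2) ^ (2 * a + 1)) *
      ∏ k ∈ Finset.Icc 1 m, ∏ j ∈ Finset.Ico 1 k, ((s j) ^ 2 - (s k) ^ 2) ^ 2 :=
  jacobi_even_decimation_density_general a ha m s hs1 hdec hsm
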